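/- arXiv:math/0611638 — 4 statements merged into one kernel-verified Lean document; each statement's English description precedes it below -/
import Mathlib

section
/- For every β ∈ [0,1] and every y > 2, the inverse of the Young function Φ_β(x) = |x|·(log(1+|x|))^β satisfies y/(log(1+y))^β ≤ Φ_β^{-1}(y) ≤ 2·y/(log(1+y))^β. -/
/-! On `[0, ∞)` write `Φ_β(x) = x · log(1 + x)^β` and let `z ≥ 0` solve `Φ_β(z) = y`.
Once `log(1 + z) ≥ 1` we have `z ≤ Φ_β(z)`, so `z ≤ y`, and the lower bound follows from
`log(1 + z) ≤ log(1 + y)`. For the upper bound, `log(1 + z)^β ≤ 1 + z` gives `y ≤ z(1 + z)`, hence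
`log(1 + y) ≤ 2 log(1 + z)` and `log(1 + y)^β ≤ 2^β log(1 + z)^β ≤ 2 log(1 + z)^β`. -/

open Real

lemma rpow_le_one_add_self {x β : ℝ} (hx : 0 ≤ x) (hβ0 : 0 ≤ β) (hβ1 : β ≤ 1) :
    x ^ β ≤ 1 + x := by
  rcases le_total x 1 with h | h
  · linarith [rpow_le_one hx h hβ0]
  · linarith [rpow_le_self_of_one_le h hβ1]

lemma rpow_le_two_mul_rpow {a b β : ℝ} (ha : 0 ≤ a) (hb : 0 ≤ b) (hab : a ≤ 2 * b)
    (hβ0 : 0 ≤ β) (hβ1 : β ≤ 1) : a ^ β ≤ 2 * b ^ β :=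
  calc a ^ β ≤ (2 * b) ^ β := rpow_le_rpow ha hab hβ0
    _ = 2 ^ β * b ^ β := mul_rpow zero_le_two hb
    _ ≤ 2 * b ^ β := by gcongr; exact rpow_le_self_of_one_le one_le_two hβ1

noncomputable def youngLog (β x : ℝ) : ℝ := x * log (1 + x) ^ β

section youngLog

variable {β x : ℝ}

lemma youngLog_nonneg (hx : 0 ≤ x) : 0 ≤ youngLog β x :=
  mul_nonneg hx (rpow_nonneg (log_nonneg (by linarith)) β)

lemma self_le_youngLog (hβ : 0 ≤ β) (hx : exp 1 ≤ 1 + x) : x ≤ youngLog β x := by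
  have hlog : 1 ≤ log (1 + x) := (le_log_iff_exp_le (by linarith [exp_pos 1])).2 hx
  have hx0 : 0 ≤ x := by linarith [add_one_le_exp 1]
  exact le_mul_of_one_le_right hx0 (one_le_rpow hlog hβ)

lemma youngLog_le_mul_one_add_self (hx : 0 ≤ x) (hβ0 : 0 ≤ β) (hβ1 : β ≤ 1) :
    youngLog β x ≤ x * (1 + x) := by
  have hlog : log (1 + x) ≤ x := by linarith [log_le_sub_one_of_pos (by linarith : 0 < 1 + x)]
  unfold youngLog
  gcongr
  linarith [rpow_le_one_add_self (log_nonneg (by linarith : 1 ≤ 1 + x)) hβ0 hβ1]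

lemma log_one_add_youngLog_le (hx : 0 ≤ x) (hβ0 : 0 ≤ β) (hβ1 : β ≤ 1) :
    log (1 + youngLog β x) ≤ 2 * log (1 + x) :=
  calc log (1 + youngLog β x) ≤ log ((1 + x) ^ 2) :=
        log_le_log (by linarith [youngLog_nonneg (β := β) hx])
          (by nlinarith [youngLog_le_mul_one_add_self hx hβ0 hβ1])
    _ = 2 * log (1 + x) := by rw [log_pow]; norm_num

end youngLog

theorem statement_0 (β : ℝ) (hβ : β ∈ Set.Icc (0:ℝ) 1)
    (Φ : ℝ → ℝ) (hΦ : ∀ x, Φ x = |x| * (Real.log (1 + |x|)) ^ β)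
    (y : ℝ) (hy : 2 < y) :
    ∀ z : ℝ, 0 ≤ z → Φ z = y →
      y / (Real.log (1 + y)) ^ β ≤ z ∧ z ≤ 2 * y / (Real.log (1 + y)) ^ β := by
  obtain ⟨hβ0, hβ1⟩ := hβ
  intro z hz hΦz
  have hyz : youngLog β z = y := by rwa [hΦ, abs_of_nonneg hz] at hΦz
  have hzy : z ≤ y := by
    by_contra! h
    have := self_le_youngLog hβ0 (by linarith [exp_one_lt_d9] : exp 1 ≤ 1 + z)
    linarith
  have hlog_pos : 0 < log (1 + y) ^ β := rpow_pos_of_pos (log_pos (by linarith)) β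
  have hlog_nonneg : 0 ≤ log (1 + z) := log_nonneg (by linarith)
  constructor
  · rw [div_le_iff₀ hlog_pos]
    calc y = z * log (1 + z) ^ β := hyz.symm
      _ ≤ z * log (1 + y) ^ β := by gcongr
  · rw [le_div_iff₀ hlog_pos]
    have hlog_le : log (1 + y) ≤ 2 * log (1 + z) := hyz ▸ log_one_add_youngLog_le hz hβ0 hβ1
    calc z * log (1 + y) ^ β ≤ z * (2 * log (1 + z) ^ β) := by
          gcongr
          exact rpow_le_two_mul_rpow (log_nonneg (by linarith)) hlog_nonneg hlog_le hβ0 hβ1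
      _ = 2 * y := by rw [← hyz, youngLog]; ring
end

section
/- Let μ be a probability measure, p ∈ (1,2), and f a bounded measurable function. Then ‖f‖_{L²(μ)}² − ‖f‖_{L^p(μ)}² = inf_{t>0} ∫ (f² − t·|f|^p + A·t^{2/(2−p)}) dμ, where A = ((2−p)/2)·(p/2)^{p/(2−p)}, and the integrand f² − t|f|^p + A t^{2/(2−p)} is pointwise nonnegative. -/
open MeasureTheory Real

lemma young_aux {p : ℝ} (hp : 1 < p) (hp2 : p < 2) (z t : ℝ) (hz : 0 ≤ z) (ht : 0 ≤ t) :
    t * z ^ p ≤ z ^ (2:ℝ) + (((2 - p) / 2) * (p / 2) ^ (p / (2 - p))) * t ^ (2 / (2 - p)) := by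
  have h2p : (0:ℝ) < 2 - p := by linarith
  have hp0 : (0:ℝ) < p := by linarith
  have hw1 : (0:ℝ) ≤ p / 2 := by positivity
  have hw2 : (0:ℝ) ≤ (2 - p) / 2 := by positivity
  have hq1 : (0:ℝ) ≤ 2 / p * z ^ (2:ℝ) := by positivity
  have hq2 : (0:ℝ) ≤ (p / 2) ^ (p / (2 - p)) * t ^ (2 / (2 - p)) := by positivity
  have hsum : p / 2 + (2 - p) / 2 = 1 := by ring
  have key := Real.geom_mean_le_arith_mean2_weighted hw1 hw2 hq1 hq2 hsum
  have hL : (2 / p * z ^ (2:ℝ)) ^ (p/2) * ((p / 2) ^ (p / (2 - p)) * t ^ (2 / (2 - p))) ^ ((2-p)/2)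
      = t * z ^ p := by
    rw [Real.mul_rpow (by positivity) (by positivity),
        Real.mul_rpow (by positivity) (by positivity),
        ← Real.rpow_mul hz, ← Real.rpow_mul (by positivity), ← Real.rpow_mul ht,
        show 2 * (p/2) = p by ring,
        show p / (2-p) * ((2-p)/2) = p/2 by field_simp,
        show 2 / (2-p) * ((2-p)/2) = 1 by field_simp,
        Real.rpow_one]
    have h1 : (2/p) ^ (p/2) * (p/2) ^ (p/2) = 1 := by
      rw [← Real.mul_rpow (by positivity) (by positivity),
        show 2 / p * (p/2) = 1 by field_simp, Real.one_rpow]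
    linear_combination (z ^ p * t) * h1
  have hR : p/2 * (2 / p * z ^ (2:ℝ)) + (2-p)/2 * ((p / 2) ^ (p / (2 - p)) * t ^ (2 / (2 - p)))
      = z ^ (2:ℝ) + (((2 - p) / 2) * (p / 2) ^ (p / (2 - p))) * t ^ (2 / (2 - p)) := by
    have h2 : p/2 * (2/p) = 1 := by field_simp
    linear_combination z ^ (2:ℝ) * h2
  rw [hL, hR] at key
  exact key

theorem statement_3 {α : Type*} [MeasurableSpace α] (μ : Measure α) [IsProbabilityMeasure μ]
    (p : ℝ) (hp : 1 < p) (hp2 : p < 2)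
    (f : α → ℝ) (hf : Measurable f) (M : ℝ) (hbd : ∀ x, |f x| ≤ M)
    (A : ℝ) (hA : A = ((2 - p) / 2) * (p / 2) ^ (p / (2 - p))) :
    ((∫ x, (f x) ^ 2 ∂μ) - (∫ x, |f x| ^ p ∂μ) ^ (2 / p)
      = ⨅ t : {t : ℝ // 0 < t},
          ∫ x, ((f x) ^ 2 - (t : ℝ) * |f x| ^ p + A * (t : ℝ) ^ (2 / (2 - p))) ∂μ)
    ∧ ∀ t : ℝ, 0 < t → ∀ x,
        0 ≤ (f x) ^ 2 - t * |f x| ^ p + A * t ^ (2 / (2 - p)) := by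
  have h2p : (0:ℝ) < 2 - p := by linarith
  have hp0 : (0:ℝ) < p := by linarith
  have hA0 : 0 < A := by rw [hA]; positivity
  haveI : Nonempty {t : ℝ // 0 < t} := ⟨⟨1, one_pos⟩⟩
  -- pointwise Young's inequality
  have young : ∀ t : ℝ, 0 < t → ∀ x,
      0 ≤ (f x) ^ 2 - t * |f x| ^ p + A * t ^ (2 / (2 - p)) := by
    intro t ht x
    have h := young_aux hp hp2 (|f x|) t (abs_nonneg _) ht.le
    rw [show ((2:ℝ)) = ((2:ℕ):ℝ) by norm_num, Real.rpow_natCast, sq_abs] at h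
    rw [hA]
    linarith
  refine ⟨?_, young⟩
  set C : ℝ := ∫ x, (f x) ^ 2 ∂μ with hC
  set N : ℝ := ∫ x, |f x| ^ p ∂μ with hNdef
  have hN0 : 0 ≤ N := integral_nonneg fun x => Real.rpow_nonneg (abs_nonneg _) _
  -- integrability
  have intf2 : Integrable (fun x => (f x) ^ 2) μ := by
    refine (integrable_const ((max M 0) ^ 2)).mono' (hf.pow_const 2).aestronglyMeasurable ?_
    filter_upwards with x
    rw [Real.norm_eq_abs, abs_pow, ← sq_abs, abs_abs]
    exact pow_le_pow_left₀ (abs_nonneg _) (le_max_of_le_left (hbd x)) 2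
  have intfp : Integrable (fun x => |f x| ^ p) μ := by
    refine (integrable_const ((max M 0) ^ p)).mono'
      ((hf.abs.pow_const p).aestronglyMeasurable) ?_
    filter_upwards with x
    rw [Real.norm_eq_abs, abs_of_nonneg (Real.rpow_nonneg (abs_nonneg _) _)]
    exact Real.rpow_le_rpow (abs_nonneg _) (le_max_of_le_left (hbd x)) hp0.le
  -- integral decomposition
  have hdecomp : ∀ t : ℝ,
      (∫ x, ((f x) ^ 2 - t * |f x| ^ p + A * t ^ (2 / (2 - p))) ∂μ)
        = C - t * N + A * t ^ (2 / (2 - p)) := by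
    intro t
    have i1 : Integrable (fun x => (f x) ^ 2 - t * |f x| ^ p) μ := intf2.sub (intfp.const_mul t)
    rw [integral_add i1 (integrable_const _),
        integral_sub intf2 (intfp.const_mul t), integral_const_mul]
    simp
    rfl
  have hdecomp' : ∀ t : {t : ℝ // 0 < t},
      (∫ x, ((f x) ^ 2 - (t : ℝ) * |f x| ^ p + A * (t : ℝ) ^ (2 / (2 - p))) ∂μ)
        = C - (t : ℝ) * N + A * (t : ℝ) ^ (2 / (2 - p)) := fun t => hdecomp t
  rw [iInf_congr hdecomp']
  -- lower bound on each term, from Young with z = N^(1/p)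
  have hlow : ∀ t : {t : ℝ // 0 < t},
      C - N ^ (2 / p) ≤ C - (t : ℝ) * N + A * (t : ℝ) ^ (2 / (2 - p)) := by
    intro t
    have h := young_aux hp hp2 (N ^ (1/p)) t (Real.rpow_nonneg hN0 _) t.2.le
    rw [← Real.rpow_mul hN0, ← Real.rpow_mul hN0,
        show 1/p * p = 1 by field_simp, show 1/p * (2:ℝ) = 2/p by ring,
        Real.rpow_one, ← hA] at h
    rw [hA] at h ⊢
    linarith
  have hbdd : BddBelow (Set.range fun t : {t : ℝ // 0 < t} =>
      C - (t : ℝ) * N + A * (t : ℝ) ^ (2 / (2 - p))) := by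
    refine ⟨C - N ^ (2 / p), ?_⟩
    rintro y ⟨t, rfl⟩
    exact hlow t
  refine le_antisymm (le_ciInf hlow) ?_
  rcases eq_or_lt_of_le hN0 with hN | hN
  · -- N = 0
    have hNz : N = 0 := hN.symm
    refine le_of_forall_pos_le_add fun ε hε => ?_
    have ht0 : (0:ℝ) < (ε / A) ^ ((2 - p) / 2) := by positivity
    refine le_trans (ciInf_le hbdd ⟨(ε / A) ^ ((2 - p) / 2), ht0⟩) (le_of_eq ?_)
    have h1 : ((ε / A) ^ ((2 - p) / 2)) ^ (2 / (2 - p)) = ε / A := by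
      rw [← Real.rpow_mul (by positivity), show (2 - p) / 2 * (2 / (2 - p)) = 1 by field_simp,
        Real.rpow_one]
    rw [hNz, Real.zero_rpow (by positivity), h1, mul_zero, sub_zero]
    field_simp
  · -- N > 0
    have ht0 : (0:ℝ) < 2 / p * N ^ ((2 - p) / p) := by positivity
    refine le_trans (ciInf_le hbdd ⟨2 / p * N ^ ((2 - p) / p), ht0⟩) (le_of_eq ?_)
    have e1 : (2 / p * N ^ ((2 - p) / p)) ^ (2 / (2 - p))
        = (2 / p) ^ (2 / (2 - p)) * N ^ (2 / p) := by
      rw [Real.mul_rpow (by positivity) (Real.rpow_nonneg hN0 _), ← Real.rpow_mul hN0,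
        show (2 - p) / p * (2 / (2 - p)) = 2 / p by field_simp]
    have e2 : A * (2 / p) ^ (2 / (2 - p)) = (2 - p) / p := by
      rw [hA, show (2:ℝ) / p = (p / 2)⁻¹ by rw [inv_div],
        Real.inv_rpow (by positivity), mul_assoc, ← div_eq_mul_inv,
        ← Real.rpow_sub (by positivity : (0:ℝ) < p/2),
        show p / (2 - p) - 2 / (2 - p) = -1 by field_simp; ring,
        Real.rpow_neg_one, show ((p:ℝ)/2)⁻¹ = 2/p by rw [inv_div]]
      field_simp
    have e3 : (2 / p * N ^ ((2 - p) / p)) * N = 2 / p * N ^ (2 / p) := by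
      have h4 : N ^ ((2:ℝ)/p) = N ^ ((2-p)/p) * N := by
        rw [show (2:ℝ)/p = (2-p)/p + 1 by field_simp; ring, Real.rpow_add hN, Real.rpow_one]
      rw [mul_assoc, ← h4]
    rw [e3, e1]
    linear_combination (norm := (field_simp; ring)) N ^ ((2:ℝ)/p) * e2
end

section
/- For β ∈ [0,1] and γ ≥ 1, let Φ(x) = x²·(log(γ+x²))^β for x ∈ ℝ. Then Φ''(x) ≥ 2·(log γ)^β for all x (Φ'' is non-decreasing on [0,∞) with Φ''(0) = 2(log γ)^β), and Φ(2x) ≤ 4^{1+β}·Φ(x) for all x. -/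
open Real Filter Topology

noncomputable def Lf (γ x : ℝ) : ℝ := Real.log (γ + x^2)
noncomputable def D1f (β γ x : ℝ) : ℝ :=
  2*x*(Lf γ x)^β + 2*β*x^3*(γ+x^2)⁻¹*(Lf γ x)^(β-1)
noncomputable def D2f (β γ x : ℝ) : ℝ :=
  2*(Lf γ x)^β + 10*β*x^2*(γ+x^2)⁻¹*(Lf γ x)^(β-1)
    - 4*β*x^4*((γ+x^2)⁻¹)^2*(Lf γ x)^(β-1)
    - 4*β*(1-β)*x^4*((γ+x^2)⁻¹)^2*(Lf γ x)^(β-2)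

variable {β γ x : ℝ}

lemma Skey (β t L : ℝ) (hβ0 : 0 ≤ β) (hβ1 : β ≤ 1) :
    0 ≤ (8*t^2-18*t+12)*L^2 - 6*(1-β)*t*(3-2*t)*L + 4*(1-β)*(2-β)*t^2 := by
  have hs0 : (0:ℝ) ≤ 1 - β := by linarith
  have ha : (0:ℝ) < 8*t^2-18*t+12 := by nlinarith [sq_nonneg (8*t-9)]
  have h56 : (0:ℝ) ≤ 56*t^2-72*t+30 := by nlinarith [sq_nonneg (28*t-18)]
  have claim1 : 36*(1-β)^2*t^2*(3-2*t)^2 ≤ 18*(1-β)*(2-β)*t^2*(3-2*t)^2 := by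
    nlinarith [mul_nonneg (mul_nonneg hs0 hβ0) (sq_nonneg (t*(3-2*t)))]
  have claim2 : 18*(1-β)*(2-β)*t^2*(3-2*t)^2 ≤ 16*(1-β)*(2-β)*t^2*(8*t^2-18*t+12) := by
    nlinarith [mul_nonneg (mul_nonneg (mul_nonneg hs0 (by linarith : (0:ℝ) ≤ 2-β)) (sq_nonneg t)) h56]
  have hdisc : (6*(1-β)*t*(3-2*t))^2 ≤ 4*(8*t^2-18*t+12)*(4*(1-β)*(2-β)*t^2) := by nlinarith
  nlinarith [sq_nonneg (2*(8*t^2-18*t+12)*L - 6*(1-β)*t*(3-2*t)), hdisc, ha, mul_pos ha ha]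

lemma P_pos (hγ : 1 ≤ γ) : (0:ℝ) < γ + x^2 := by nlinarith [sq_nonneg x]

lemma L_nonneg (hγ : 1 ≤ γ) : 0 ≤ Lf γ x := Real.log_nonneg (by nlinarith [sq_nonneg x])

lemma L_ge (hγ : 1 ≤ γ) : x^2*(γ+x^2)⁻¹ ≤ Lf γ x := by
  have hP := P_pos (x := x) hγ
  have h1 : Real.log ((γ+x^2)⁻¹) ≤ (γ+x^2)⁻¹ - 1 :=
    Real.log_le_sub_one_of_pos (by positivity)
  rw [Real.log_inv] at h1
  have h2 : (γ+x^2)⁻¹ * (γ+x^2) = 1 := inv_mul_cancel₀ hP.ne'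
  have h3 : (0:ℝ) ≤ (γ+x^2)⁻¹ := by positivity
  unfold Lf
  nlinarith [mul_nonneg h3 (by linarith : (0:ℝ) ≤ γ - 1)]

lemma t_le_one (hγ : 1 ≤ γ) : x^2*(γ+x^2)⁻¹ ≤ 1 := by
  rw [← div_eq_mul_inv]
  exact div_le_one_of_le₀ (by nlinarith) (P_pos hγ).le

lemma logγ_le_L (hγ : 1 ≤ γ) : Real.log γ ≤ Lf γ x :=
  Real.log_le_log (by linarith) (by nlinarith [sq_nonneg x])

lemma L_eq_zero (hγ : 1 ≤ γ) (h : Lf γ x = 0) : γ = 1 ∧ x = 0 := by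
  have hP := P_pos (x := x) hγ
  have : γ + x^2 = 1 := by
    rcases (Real.log_eq_zero).1 h with h'|h'|h' <;> [linarith; exact h'; nlinarith [sq_nonneg x]]
  constructor <;> nlinarith [sq_nonneg x]

lemma L_pos_of_ne (hγ : 1 ≤ γ) (hx : x ≠ 0) : 0 < Lf γ x := by
  rcases eq_or_ne (Lf γ x) 0 with h|h
  · exact absurd (L_eq_zero hγ h).2 hx
  · exact (L_nonneg hγ).lt_of_ne' h

lemma hasDerivAt_L (hγ : 1 ≤ γ) : HasDerivAt (Lf γ) (2*x*(γ+x^2)⁻¹) x := by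
  have hP : HasDerivAt (fun y : ℝ => γ + y^2) (2*x) x := by
    simpa using (hasDerivAt_pow 2 x).const_add γ
  show HasDerivAt (fun y => Real.log (γ + y^2)) (2*x*(γ+x^2)⁻¹) x
  simpa [div_eq_mul_inv, mul_comm] using hP.log (P_pos hγ).ne'

lemma hasDerivAt_Lp (hγ : 1 ≤ γ) (hL : Lf γ x ≠ 0) (p : ℝ) :
    HasDerivAt (fun y => (Lf γ y)^p) (p*(Lf γ x)^(p-1)*(2*x*(γ+x^2)⁻¹)) x := by
  simpa [mul_comm, mul_assoc, mul_left_comm] using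
    (hasDerivAt_L hγ).rpow_const (p := p) (Or.inl hL)

lemma hasDerivAt_Q (hγ : 1 ≤ γ) :
    HasDerivAt (fun y : ℝ => (γ+y^2)⁻¹) (-(2*x)*((γ+x^2)⁻¹)^2) x := by
  have hP : HasDerivAt (fun y : ℝ => γ + y^2) (2*x) x := by
    simpa using (hasDerivAt_pow 2 x).const_add γ
  simpa [Pi.inv_def, div_eq_mul_inv, sq, mul_comm, mul_assoc, mul_left_comm] using hP.inv (P_pos hγ).ne'

lemma hasDerivAt_Phi (hγ : 1 ≤ γ) (hL : Lf γ x ≠ 0) :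
    HasDerivAt (fun y => y^2*(Lf γ y)^β) (D1f β γ x) x := by
  have h := (hasDerivAt_pow 2 x).mul (hasDerivAt_Lp hγ hL β)
  refine h.congr_deriv ?_
  unfold D1f
  push_cast
  ring

lemma hasDerivAt_D1 (hγ : 1 ≤ γ) (hL : Lf γ x ≠ 0) :
    HasDerivAt (D1f β γ) (D2f β γ x) x := by
  have h1 : HasDerivAt (fun y => 2*y*(Lf γ y)^β)
      (2*(Lf γ x)^β + 2*x*(β*(Lf γ x)^(β-1)*(2*x*(γ+x^2)⁻¹))) x := by
    have := ((hasDerivAt_id x).const_mul 2).mul (hasDerivAt_Lp hγ hL β)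
    refine this.congr_deriv ?_
    simp only [id_eq]
    ring
  have h2 : HasDerivAt (fun y => 2*β*y^3*(γ+y^2)⁻¹*(Lf γ y)^(β-1))
      ((2*β*(3*x^2)*(γ+x^2)⁻¹ + 2*β*x^3*(-(2*x)*((γ+x^2)⁻¹)^2))*(Lf γ x)^(β-1)
        + 2*β*x^3*(γ+x^2)⁻¹*((β-1)*(Lf γ x)^(β-1-1)*(2*x*(γ+x^2)⁻¹))) x := by
    have hp3 : HasDerivAt (fun y : ℝ => 2*β*y^3) (2*β*(3*x^2)) x := by
      simpa using (hasDerivAt_pow 3 x).const_mul (2*β)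
    exact ((hp3.mul (hasDerivAt_Q hγ)).mul (hasDerivAt_Lp hγ hL (β-1)))
  have h := h1.add h2
  have hD : D1f β γ = fun y => 2*y*(Lf γ y)^β + 2*β*y^3*(γ+y^2)⁻¹*(Lf γ y)^(β-1) := rfl
  rw [hD]
  refine h.congr_deriv ?_
  unfold D2f
  rw [show β-1-1 = β-2 by ring]
  ring

lemma hasDerivAt_D2 (hγ : 1 ≤ γ) (hL : 0 < Lf γ x) :
    HasDerivAt (D2f β γ)
      (2*x*β*(γ+x^2)⁻¹*(Lf γ x)^(β-3) *
        ((8*(x^2*(γ+x^2)⁻¹)^2-18*(x^2*(γ+x^2)⁻¹)+12)*(Lf γ x)^2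
          - 6*(1-β)*(x^2*(γ+x^2)⁻¹)*(3-2*(x^2*(γ+x^2)⁻¹))*(Lf γ x)
          + 4*(1-β)*(2-β)*(x^2*(γ+x^2)⁻¹)^2)) x := by
  have hLne := hL.ne'
  have h1 := (hasDerivAt_Lp hγ hLne β).const_mul 2
  have h2 : HasDerivAt (fun y => 10*β*y^2*(γ+y^2)⁻¹*(Lf γ y)^(β-1))
      ((10*β*(2*x)*(γ+x^2)⁻¹ + 10*β*x^2*(-(2*x)*((γ+x^2)⁻¹)^2))*(Lf γ x)^(β-1)
        + 10*β*x^2*(γ+x^2)⁻¹*((β-1)*(Lf γ x)^(β-1-1)*(2*x*(γ+x^2)⁻¹))) x := by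
    have hp : HasDerivAt (fun y : ℝ => 10*β*y^2) (10*β*(2*x)) x := by
      simpa using (hasDerivAt_pow 2 x).const_mul (10*β)
    exact ((hp.mul (hasDerivAt_Q hγ)).mul (hasDerivAt_Lp hγ hLne (β-1)))
  have hQ2 : HasDerivAt (fun y : ℝ => ((γ+y^2)⁻¹)^2)
      (2*((γ+x^2)⁻¹)^1*(-(2*x)*((γ+x^2)⁻¹)^2)) x := by
    simpa [Pi.pow_def] using (hasDerivAt_Q (x := x) hγ).pow 2
  have h3 : HasDerivAt (fun y => 4*β*y^4*((γ+y^2)⁻¹)^2*(Lf γ y)^(β-1))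
      ((4*β*(4*x^3)*((γ+x^2)⁻¹)^2 + 4*β*x^4*(2*((γ+x^2)⁻¹)^1*(-(2*x)*((γ+x^2)⁻¹)^2)))*(Lf γ x)^(β-1)
        + 4*β*x^4*((γ+x^2)⁻¹)^2*((β-1)*(Lf γ x)^(β-1-1)*(2*x*(γ+x^2)⁻¹))) x := by
    have hp : HasDerivAt (fun y : ℝ => 4*β*y^4) (4*β*(4*x^3)) x := by
      simpa using (hasDerivAt_pow 4 x).const_mul (4*β)
    exact ((hp.mul hQ2).mul (hasDerivAt_Lp hγ hLne (β-1)))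
  have h4 : HasDerivAt (fun y => 4*β*(1-β)*y^4*((γ+y^2)⁻¹)^2*(Lf γ y)^(β-2))
      ((4*β*(1-β)*(4*x^3)*((γ+x^2)⁻¹)^2 + 4*β*(1-β)*x^4*(2*((γ+x^2)⁻¹)^1*(-(2*x)*((γ+x^2)⁻¹)^2)))*(Lf γ x)^(β-2)
        + 4*β*(1-β)*x^4*((γ+x^2)⁻¹)^2*((β-2)*(Lf γ x)^(β-2-1)*(2*x*(γ+x^2)⁻¹))) x := by
    have hp : HasDerivAt (fun y : ℝ => 4*β*(1-β)*y^4) (4*β*(1-β)*(4*x^3)) x := by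
      simpa using (hasDerivAt_pow 4 x).const_mul (4*β*(1-β))
    exact ((hp.mul hQ2).mul (hasDerivAt_Lp hγ hLne (β-2)))
  have h := ((h1.add h2).sub h3).sub h4
  have hD : D2f β γ = fun y => 2*(Lf γ y)^β + 10*β*y^2*(γ+y^2)⁻¹*(Lf γ y)^(β-1)
      - 4*β*y^4*((γ+y^2)⁻¹)^2*(Lf γ y)^(β-1)
      - 4*β*(1-β)*y^4*((γ+y^2)⁻¹)^2*(Lf γ y)^(β-2) := rfl
  rw [hD]
  refine h.congr_deriv ?_
  have e1 : (Lf γ x)^(β-1) = (Lf γ x)^(β-3) * (Lf γ x)^2 := by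
    rw [show β-1 = (β-3)+2 by ring, Real.rpow_add hL]
    norm_num [Real.rpow_natCast]
  have e2 : (Lf γ x)^(β-2) = (Lf γ x)^(β-3) * (Lf γ x) := by
    rw [show β-2 = (β-3)+1 by ring, Real.rpow_add hL, Real.rpow_one]
  rw [show β-1-1 = β-2 by ring, show β-2-1 = β-3 by ring, e1, e2]
  ring

lemma Lcont (hγ : 1 ≤ γ) : ContinuousAt (Lf γ) x := by
  unfold Lf
  exact ContinuousAt.log (by fun_prop) (P_pos hγ).ne'

lemma Lrpow_cont0 (hβ0 : 0 < β) : ContinuousAt (fun y => (Lf 1 y)^β) 0 :=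
  (Lcont le_rfl).rpow_const (Or.inr hβ0.le)

lemma specialA (hβ0 : 0 < β) : HasDerivAt (fun y : ℝ => y^2*(Lf 1 y)^β) 0 0 := by
  rw [hasDerivAt_iff_tendsto_slope]
  have h : Tendsto (fun y : ℝ => y * (Lf 1 y)^β) (nhds 0) (nhds 0) := by
    have := (continuousAt_id.mul (Lrpow_cont0 hβ0)).tendsto
    simpa [Lf, Real.zero_rpow hβ0.ne', Pi.mul_def] using this
  apply Tendsto.congr' _ (h.mono_left nhdsWithin_le_nhds)
  filter_upwards [self_mem_nhdsWithin] with y hy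
  have hy' : y ≠ 0 := hy
  rw [slope_def_field]
  field_simp
  ring

lemma specialB (hβ0 : 0 < β) (hβ1 : β ≤ 1) : HasDerivAt (D1f β 1) 0 0 := by
  rw [hasDerivAt_iff_tendsto_slope]
  have h1 : Tendsto (fun y : ℝ => 2 * (Lf 1 y)^β) (nhds 0) (nhds 0) := by
    have := ((Lrpow_cont0 hβ0).const_smul (2:ℝ)).tendsto
    simpa [Lf, Real.zero_rpow hβ0.ne', Pi.smul_def] using this
  have h2 : Tendsto (fun y : ℝ => 2*β*y^2*(1+y^2)⁻¹*(Lf 1 y)^(β-1)) (𝓝[≠] 0) (nhds 0) := by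
    have hub : Tendsto (fun y : ℝ => 4*β*(y^2/2)^β) (nhds 0) (nhds 0) := by
      have hc : ContinuousAt (fun y : ℝ => 4*β*(y^2/2)^β) 0 := by
        apply ContinuousAt.mul continuousAt_const
        exact (ContinuousAt.rpow_const (by fun_prop) (Or.inr hβ0.le))
      have := hc.tendsto
      simpa [Real.zero_rpow hβ0.ne'] using this
    apply tendsto_of_tendsto_of_tendsto_of_le_of_le' tendsto_const_nhds
      (hub.mono_left nhdsWithin_le_nhds)
    · filter_upwards with y
      have := L_nonneg (γ := 1) (x := y) le_rfl
      positivity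
    · filter_upwards [self_mem_nhdsWithin,
        mem_nhdsWithin_of_mem_nhds (Ioo_mem_nhds (by norm_num : (-1:ℝ) < 0) (by norm_num : (0:ℝ) < 1))]
        with y hy0 hy1
      have hy0' : y ≠ 0 := hy0
      have hysq : 0 < y^2 := by positivity
      have hyle : y^2 ≤ 1 := by
        obtain ⟨ha, hb⟩ := hy1
        nlinarith
      have hL : y^2/2 ≤ Lf 1 y := by
        have := L_ge (γ := 1) (x := y) le_rfl
        have h2 : (1+y^2)⁻¹ * (1+y^2) = 1 := inv_mul_cancel₀ (by positivity)
        have h3 : (0:ℝ) ≤ (1+y^2)⁻¹ := by positivity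
        nlinarith [mul_nonneg h3 (by linarith : (0:ℝ) ≤ 1 - y^2)]
      have hrp : (Lf 1 y)^(β-1) ≤ (y^2/2)^(β-1) :=
        Real.rpow_le_rpow_of_nonpos (by positivity) hL (by linarith)
      have hQ : (1+y^2)⁻¹ ≤ 1 := by
        rw [inv_le_one_iff₀]; right; nlinarith
      have hcollapse : (y^2/2) * (y^2/2)^(β-1) = (y^2/2)^β := by
        nth_rewrite 1 [← Real.rpow_one (y^2/2)]
        rw [← Real.rpow_add (by positivity)]
        ring_nf
      have hrpnn : (0:ℝ) ≤ (Lf 1 y)^(β-1) := Real.rpow_nonneg (L_nonneg le_rfl) _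
      calc 2*β*y^2*(1+y^2)⁻¹*(Lf 1 y)^(β-1)
          ≤ 2*β*y^2*1*(y^2/2)^(β-1) := by
            apply mul_le_mul _ hrp hrpnn (by positivity)
            exact mul_le_mul_of_nonneg_left hQ (by positivity)
        _ = 4*β*((y^2/2) * (y^2/2)^(β-1)) := by ring
        _ = 4*β*(y^2/2)^β := by rw [hcollapse]
  have hsum := (h1.mono_left nhdsWithin_le_nhds).add h2
  apply Tendsto.congr' _ (by simpa using hsum)
  filter_upwards [self_mem_nhdsWithin] with y hy
  have hy' : y ≠ 0 := hy
  have hP : (0:ℝ) < 1 + y^2 := by positivity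
  rw [slope_def_field]
  unfold D1f
  field_simp
  ring

lemma key1 (hβ0 : 0 < β) (hβ1 : β ≤ 1) (hγ : 1 ≤ γ) :
    2*(Real.log γ)^β ≤ D2f β γ x := by
  rcases eq_or_ne (Lf γ x) 0 with hL|hL
  · obtain ⟨hγ1, hx0⟩ := L_eq_zero hγ hL
    subst hγ1; subst hx0
    unfold D2f
    simp [Lf, Real.zero_rpow hβ0.ne', Real.log_one]
  · have hLpos : 0 < Lf γ x := (L_nonneg hγ).lt_of_ne' hL
    have e2 : (Lf γ x)^(β-1) = (Lf γ x)^(β-2) * (Lf γ x) := by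
      rw [show β-1 = (β-2)+1 by ring, Real.rpow_add hLpos, Real.rpow_one]
    have hsplit : D2f β γ x = 2*(Lf γ x)^β + β*(Lf γ x)^(β-2) *
        (10*(x^2*(γ+x^2)⁻¹)*(Lf γ x) - 4*(x^2*(γ+x^2)⁻¹)^2*(Lf γ x)
          - 4*(1-β)*(x^2*(γ+x^2)⁻¹)^2) := by
      unfold D2f; rw [e2]; ring
    have ht0 : 0 ≤ x^2*(γ+x^2)⁻¹ := by positivity
    have ht1 := t_le_one (x := x) hγ
    have htL := L_ge (x := x) hγ
    have hnn : 0 ≤ 10*(x^2*(γ+x^2)⁻¹)*(Lf γ x) - 4*(x^2*(γ+x^2)⁻¹)^2*(Lf γ x)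
        - 4*(1-β)*(x^2*(γ+x^2)⁻¹)^2 := by
      nlinarith [mul_nonneg ht0 (sub_nonneg.2 htL), mul_nonneg ht0 ht0,
        mul_nonneg (mul_nonneg ht0 ht0) (sub_nonneg.2 ht1),
        mul_nonneg (mul_nonneg ht0 (sub_nonneg.2 htL)) (sub_nonneg.2 ht1)]
    have hrpow : 2*(Real.log γ)^β ≤ 2*(Lf γ x)^β := by
      have := Real.rpow_le_rpow (Real.log_nonneg hγ) (logγ_le_L (x := x) hγ) hβ0.le
      linarith
    have hprod : 0 ≤ β*(Lf γ x)^(β-2) * (10*(x^2*(γ+x^2)⁻¹)*(Lf γ x)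
        - 4*(x^2*(γ+x^2)⁻¹)^2*(Lf γ x) - 4*(1-β)*(x^2*(γ+x^2)⁻¹)^2) := by
      have hr2 : (0:ℝ) ≤ (Lf γ x)^(β-2) := Real.rpow_nonneg (L_nonneg hγ) _
      positivity
    rw [hsplit]
    linarith

lemma D2_zero (hγ : 1 ≤ γ) : D2f β γ 0 = 2*(Real.log γ)^β := by
  unfold D2f Lf
  norm_num

lemma monoD2 (hβ0 : 0 < β) (hβ1 : β ≤ 1) (hγ : 1 ≤ γ) :
    MonotoneOn (D2f β γ) (Set.Ici 0) := by
  intro a ha b hb hab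
  rcases eq_or_lt_of_le (Set.mem_Ici.1 ha) with h0|h0
  · rw [← h0, D2_zero hγ]
    exact key1 hβ0 hβ1 hγ
  · have hmono : MonotoneOn (D2f β γ) (Set.Ici a) := by
      have hLpos : ∀ y ∈ Set.Ici a, 0 < Lf γ y := fun y hy =>
        L_pos_of_ne hγ (by have := Set.mem_Ici.1 hy; intro h; rw [h] at this; linarith)
      apply monotoneOn_of_deriv_nonneg (convex_Ici a)
      · intro y hy
        exact ((hasDerivAt_D2 hγ (hLpos y hy)).continuousAt).continuousWithinAt
      · intro y hy
        rw [interior_Ici] at hy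
        exact ((hasDerivAt_D2 hγ (hLpos y (Set.mem_Ici.2 (le_of_lt hy)))).differentiableAt).differentiableWithinAt
      · intro y hy
        rw [interior_Ici] at hy
        have hy' : 0 < y := lt_trans h0 hy
        have hLy := hLpos y (Set.mem_Ici.2 (le_of_lt hy))
        rw [(hasDerivAt_D2 hγ hLy).deriv]
        have hS := Skey β (y^2*(γ+y^2)⁻¹) (Lf γ y) hβ0.le hβ1
        have h1 : (0:ℝ) ≤ 2*y*β*(γ+y^2)⁻¹*(Lf γ y)^(β-3) := by
          have : (0:ℝ) ≤ (Lf γ y)^(β-3) := Real.rpow_nonneg (L_nonneg hγ) _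
          have hQ : (0:ℝ) ≤ (γ+y^2)⁻¹ := by positivity
          positivity
        exact mul_nonneg h1 hS
    exact hmono (Set.mem_Ici.2 le_rfl) (Set.mem_Ici.2 hab) hab

lemma doubling (hβ0 : 0 ≤ β) (hγ : 1 ≤ γ) (y : ℝ) :
    (2*y)^2 * (Real.log (γ + (2*y)^2))^β ≤ 4^(1+β) * (y^2 * (Real.log (γ + y^2))^β) := by
  have hP : (0:ℝ) < γ + y^2 := P_pos hγ
  have hP4 : (0:ℝ) < γ + (2*y)^2 := P_pos hγ
  have hlog1 : (0:ℝ) ≤ Real.log (γ + (2*y)^2) := Real.log_nonneg (by nlinarith [sq_nonneg y])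
  have hlognn : (0:ℝ) ≤ Real.log (γ + y^2) := Real.log_nonneg (by nlinarith [sq_nonneg y])
  have hineq : γ + (2*y)^2 ≤ (γ + y^2)^4 := by
    nlinarith [sq_nonneg y, sq_nonneg (y^2), sq_nonneg (γ-1), sq_nonneg (γ*y),
      mul_nonneg (sq_nonneg y) (sq_nonneg y), sq_nonneg (γ*y^2),
      mul_nonneg (mul_nonneg (by linarith : (0:ℝ) ≤ γ - 1) (sq_nonneg y)) (sq_nonneg y),
      mul_nonneg (mul_nonneg (by linarith : (0:ℝ) ≤ γ - 1) (by linarith : (0:ℝ) ≤ γ)) (sq_nonneg y)]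
  have hlog2 : Real.log (γ + (2*y)^2) ≤ 4 * Real.log (γ + y^2) := by
    calc Real.log (γ + (2*y)^2) ≤ Real.log ((γ + y^2)^4) := Real.log_le_log hP4 hineq
      _ = 4 * Real.log (γ + y^2) := by
          rw [Real.log_pow]; push_cast; ring
  have hstep : (Real.log (γ + (2*y)^2))^β ≤ 4^β * (Real.log (γ + y^2))^β := by
    calc (Real.log (γ + (2*y)^2))^β ≤ (4 * Real.log (γ + y^2))^β :=
          Real.rpow_le_rpow hlog1 hlog2 hβ0
      _ = 4^β * (Real.log (γ + y^2))^β := Real.mul_rpow (by norm_num) hlognn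
  have h4 : (4:ℝ)^(1+β) = 4 * 4^β := by
    rw [Real.rpow_add (by norm_num), Real.rpow_one]
  rw [h4]
  calc (2*y)^2 * (Real.log (γ + (2*y)^2))^β
      ≤ (2*y)^2 * (4^β * (Real.log (γ + y^2))^β) :=
        mul_le_mul_of_nonneg_left hstep (by positivity)
    _ = 4 * 4^β * (y^2 * (Real.log (γ + y^2))^β) := by ring

theorem statement_10 (β : ℝ) (hβ : β ∈ Set.Icc (0:ℝ) 1) (γ : ℝ) (hγ : 1 ≤ γ)
    (Φ : ℝ → ℝ) (hΦ : ∀ x, Φ x = x ^ 2 * (Real.log (γ + x ^ 2)) ^ β) :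
    (∀ x : ℝ, 2 * (Real.log γ) ^ β ≤ deriv (deriv Φ) x)
    ∧ MonotoneOn (deriv (deriv Φ)) (Set.Ici 0)
    ∧ deriv (deriv Φ) 0 = 2 * (Real.log γ) ^ β
    ∧ ∀ x : ℝ, Φ (2 * x) ≤ 4 ^ (1 + β) * Φ x := by
  obtain ⟨hβ0, hβ1⟩ := hβ
  have hdbl : ∀ x : ℝ, Φ (2 * x) ≤ 4 ^ (1 + β) * Φ x := by
    intro x
    rw [hΦ, hΦ]
    exact doubling hβ0 hγ x
  rcases eq_or_lt_of_le hβ0 with hb0|hb0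
  · -- β = 0
    subst hb0
    have hΦ' : Φ = fun x : ℝ => x^2 := by
      funext y
      rw [hΦ y, Real.rpow_zero, mul_one]
    have hd1 : deriv Φ = fun y : ℝ => 2*y := by
      rw [hΦ']
      funext y
      simpa using (hasDerivAt_pow 2 y).deriv
    have hd2 : deriv (deriv Φ) = fun _ : ℝ => (2:ℝ) := by
      rw [hd1]
      funext y
      simpa using ((hasDerivAt_id y).const_mul (2:ℝ)).deriv
    rw [hd2, Real.rpow_zero]
    exact ⟨fun x => by norm_num, monotoneOn_const, by norm_num, hdbl⟩
  · -- 0 < β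
    have hΦfun : Φ = fun y => y^2*(Lf γ y)^β := by
      funext y
      rw [hΦ y]
      rfl
    have hd1 : ∀ y, HasDerivAt Φ (D1f β γ y) y := by
      intro y
      rw [hΦfun]
      rcases eq_or_ne (Lf γ y) 0 with h|h
      · obtain ⟨hγ1, hy0⟩ := L_eq_zero hγ h
        subst hγ1; subst hy0
        have hval : D1f β 1 0 = 0 := by
          unfold D1f
          norm_num
        rw [hval]
        exact specialA hb0
      · exact hasDerivAt_Phi hγ h
    have hΦ1 : deriv Φ = D1f β γ := funext fun y => (hd1 y).deriv
    have hd2 : ∀ y, HasDerivAt (D1f β γ) (D2f β γ y) y := by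
      intro y
      rcases eq_or_ne (Lf γ y) 0 with h|h
      · obtain ⟨hγ1, hy0⟩ := L_eq_zero hγ h
        subst hγ1; subst hy0
        have hval : D2f β 1 0 = 0 := by
          unfold D2f Lf
          norm_num [Real.zero_rpow hb0.ne']
        rw [hval]
        exact specialB hb0 hβ1
      · exact hasDerivAt_D1 hγ h
    have hΦ2 : deriv (deriv Φ) = D2f β γ := by
      rw [hΦ1]
      exact funext fun y => (hd2 y).deriv
    rw [hΦ2]
    exact ⟨fun x => key1 hb0 hβ1 hγ, monoD2 hb0 hβ1 hγ, D2_zero hγ, hdbl⟩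
end

section
/- (Discrete capacity iteration lemma) Let F : [2,∞) → [0,∞) be non-decreasing with x ↦ F(x)/x non-increasing, and suppose there exists λ' ≥ 4 such that F(λ'x) ≤ λ'·F(x)/4 for all x ≥ 2. Let (a_k)_{k∈ℤ} be a non-increasing double-sided sequence with values in [0, 1/2]. If 2^{2k}·a_{k+1}·F(1/a_k) ≤ C for all k ∈ ℤ with a_k > 0, then 2^{2k}·a_k·F(1/a_k) ≤ λ'·C for all k ∈ ℤ with a_k > 0. -/
open Real

theorem statement_17 (F : ℝ → ℝ)
    (hFnn : ∀ x : ℝ, 2 ≤ x → 0 ≤ F x)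
    (hFmono : MonotoneOn F (Set.Ici (2:ℝ)))
    (hslope : AntitoneOn (fun x => F x / x) (Set.Ici (2:ℝ)))
    (lam : ℝ) (hlam : 4 ≤ lam)
    (hFdbl : ∀ x : ℝ, 2 ≤ x → F (lam * x) ≤ lam * F x / 4)
    (a : ℤ → ℝ) (hanti : Antitone a)
    (hrange : ∀ k : ℤ, a k ∈ Set.Icc (0:ℝ) (1/2))
    (C : ℝ)
    (hhyp : ∀ k : ℤ, 0 < a k → (2:ℝ) ^ (2 * k) * a (k + 1) * F (1 / a k) ≤ C) :
    ∀ k : ℤ, 0 < a k → (2:ℝ) ^ (2 * k) * a k * F (1 / a k) ≤ lam * C := by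
  have hlam1 : (1:ℝ) < lam := by linarith
  have hlam0 : (0:ℝ) < lam := by linarith
  have key : ∀ n : ℕ, ∀ k : ℤ, 0 < a k → 1/2 < lam ^ n * a k →
      (2:ℝ) ^ (2 * k) * a k * F (1 / a k) ≤ lam * C := by
    intro n
    induction n with
    | zero =>
      intro k hk h
      exfalso
      have := (hrange k).2
      simp only [pow_zero, one_mul] at h
      linarith
    | succ n ih =>
      intro k hk hgt
      have hk1pos : 0 < a (k - 1) := lt_of_lt_of_le hk (hanti (by linarith))
      have hk1half := (hrange (k - 1)).2
      have hkhalf := (hrange k).2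
      have h2le : (2:ℝ) ≤ 1 / a k := by
        rw [le_div_iff₀ hk]; linarith
      have h2le1 : (2:ℝ) ≤ 1 / a (k - 1) := by
        rw [le_div_iff₀ hk1pos]; linarith
      have h2lel : (2:ℝ) ≤ lam * (1 / a (k - 1)) := by nlinarith
      have hF0 : 0 ≤ F (1 / a (k - 1)) := hFnn _ h2le1
      have hFd := hFdbl (1 / a (k - 1)) h2le1
      have hP : (2:ℝ) ^ (2 * (k - 1)) = (2:ℝ) ^ (2 * k) / 4 := by
        rw [show 2 * (k - 1) = 2 * k - 2 by ring, zpow_sub₀ (by norm_num : (2:ℝ) ≠ 0)]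
        norm_num
      have hPpos : (0:ℝ) < (2:ℝ) ^ (2 * k) := zpow_pos (by norm_num) _
      by_cases hcase : a (k - 1) ≤ lam * a k
      · -- Case A
        have hC := hhyp (k - 1) hk1pos
        rw [show k - 1 + 1 = k by ring, hP] at hC
        have hle : 1 / a k ≤ lam * (1 / a (k - 1)) := by
          rw [mul_one_div, div_le_div_iff₀ hk hk1pos]
          linarith
        have hF1 : F (1 / a k) ≤ F (lam * (1 / a (k - 1))) :=
          hFmono h2le h2lel hle
        have hF2 : F (1 / a k) ≤ lam * F (1 / a (k - 1)) / 4 := hF1.trans hFd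
        nlinarith [mul_le_mul_of_nonneg_left hF2
          (le_of_lt (mul_pos hPpos hk)), mul_pos hPpos hk]
      · -- Case B
        push_neg at hcase
        have hle : lam * (1 / a (k - 1)) ≤ 1 / a k := by
          rw [mul_one_div, div_le_div_iff₀ hk1pos hk]
          nlinarith
        have hs := hslope (Set.mem_Ici.mpr h2lel) (Set.mem_Ici.mpr h2le) hle
        -- hs : F (lam * (1 / a (k-1))) / (lam * (1 / a (k-1))) ≥ F (1/a k) * a k  (direction: ≤)
        have hs' : F (1 / a k) * a k ≤ a (k - 1) * F (1 / a (k - 1)) / 4 := by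
          have h1 : F (1 / a k) / (1 / a k) = F (1 / a k) * a k := by
            field_simp
          have h2 : F (lam * (1 / a (k - 1))) / (lam * (1 / a (k - 1)))
              = F (lam * (1 / a (k - 1))) * a (k - 1) / lam := by
            rw [mul_one_div, div_div_eq_mul_div]
          simp only at hs
          rw [h1, h2] at hs
          have h3 : F (lam * (1 / a (k - 1))) * a (k - 1) / lam
              ≤ (lam * F (1 / a (k - 1)) / 4) * a (k - 1) / lam := by
            gcongr
          have h4 : (lam * F (1 / a (k - 1)) / 4) * a (k - 1) / lam
              = a (k - 1) * F (1 / a (k - 1)) / 4 := by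
            field_simp
          linarith
        have hprev : 1 / 2 < lam ^ n * a (k - 1) := by
          have hpowpos : (0:ℝ) < lam ^ n := pow_pos hlam0 n
          have : lam ^ (n + 1) * a k ≤ lam ^ n * a (k - 1) := by
            rw [pow_succ]
            nlinarith
          linarith
        have hIH := ih (k - 1) hk1pos hprev
        rw [hP] at hIH
        nlinarith [mul_le_mul_of_nonneg_left hs' (le_of_lt hPpos)]
  intro k hk
  obtain ⟨n, hn⟩ := pow_unbounded_of_one_lt (1 / (2 * a k)) hlam1
  apply key n k hk
  rw [div_lt_iff₀ (by positivity)] at hn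
  nlinarith [pow_pos hlam0 n]
end
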